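/- Let d ≥ 1, L ∈ ℕ₀, K > 0, and let Φ, Φ₀ ∈ L₂(ℝ^d). Assume Φ satisfies condition (D) and the moment condition (M_{L−1}), and Φ₀ satisfies conditions (D) and (S_K). Then for every N ∈ ℕ there exists a constant C_N such that |(W_Φ Φ₀)(x,t)| ≤ C_N t^{min{L,K}+d/2} (1+|x|)^{−N} for all x ∈ ℝ^d and all 0 < t < 1. -/

import Mathlib

open MeasureTheory Real SchwartzMap Set
open scoped ENNReal NNReal FourierTransform

noncomputable section

/-- `d`-dimensional Euclidean space. -/
abbrev Ed (d : ℕ) : Type := EuclideanSpace ℝ (Fin d)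

/-- Complex-valued Schwartz functions on `ℝ^d`. -/
abbrev SchwartzC (d : ℕ) := SchwartzMap (Ed d) ℂ

/-- Tempered distributions on `ℝ^d`. -/
abbrev TemperedDist (d : ℕ) := SchwartzC d →L[ℂ] ℂ

variable {d : ℕ}

lemma affine_htg (a : Ed d) (L : Ed d →L[ℝ] Ed d) :
    Function.HasTemperateGrowth (fun y : Ed d => a + L y) := by
  apply Function.HasTemperateGrowth.of_fderiv (k := 1) (C := ‖a‖ + ‖L‖)
  · have h : (fderiv ℝ fun y : Ed d => a + L y) = fun _ => (L : Ed d →L[ℝ] Ed d) := by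
      funext y
      rw [fderiv_const_add]
      exact L.fderiv
    rw [h]
    exact .const _
  · exact (differentiable_const a).add L.differentiable
  · intro y
    have h1 : ‖a + L y‖ ≤ ‖a‖ + ‖L‖ * ‖y‖ :=
      (norm_add_le _ _).trans (by gcongr; exact L.le_opNorm y)
    have h2 : (0:ℝ) ≤ ‖a‖ := norm_nonneg a
    have h3 : (0:ℝ) ≤ ‖L‖ := norm_nonneg L
    have h4 : (0:ℝ) ≤ ‖y‖ := norm_nonneg y
    nlinarith

lemma htg_shiftdil (x : Ed d) (c : ℝ) :
    Function.HasTemperateGrowth (fun y : Ed d => c • (x - y)) := by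
  have h : (fun y : Ed d => c • (x - y))
      = fun y => c • x + ((-c) • ContinuousLinearMap.id ℝ (Ed d)) y := by
    funext y
    simp [smul_sub, sub_eq_add_neg, neg_smul]
  rw [h]
  exact affine_htg _ _

/-- The Schwartz function `y ↦ Φ (t⁻¹ • (x - y))`. -/
def shiftDil (Φ : SchwartzC d) (x : Ed d) {t : ℝ} (ht : 0 < t) : SchwartzC d :=
  SchwartzMap.compCLM ℂ (htg_shiftdil x t⁻¹)
    ⟨1, ‖x‖ + t, by
      intro y
      have h1 : ‖t⁻¹ • (x - y)‖ = t⁻¹ * ‖x - y‖ := by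
        rw [norm_smul, Real.norm_eq_abs, abs_of_pos (by positivity)]
      have h2 : ‖y‖ ≤ ‖x‖ + ‖x - y‖ := by
        have hy : y = x - (x - y) := by abel
        calc ‖y‖ = ‖x - (x - y)‖ := by rw [← hy]
        _ ≤ ‖x‖ + ‖x - y‖ := norm_sub_le _ _
      have h3 : ‖x - y‖ = t * ‖t⁻¹ • (x - y)‖ := by
        rw [h1]; field_simp
      have h4 : (0:ℝ) ≤ ‖t⁻¹ • (x - y)‖ := norm_nonneg _
      have h5 : (0:ℝ) ≤ ‖x‖ := norm_nonneg x
      calc ‖y‖ ≤ ‖x‖ + t * ‖t⁻¹ • (x - y)‖ := by rw [← h3]; exact h2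
      _ ≤ (‖x‖ + t) * (1 + ‖t⁻¹ • (x - y)‖) ^ 1 := by nlinarith⟩ Φ

/-- `(Φ_t ∗ f)(x) = f (Φ_t (x - ·))` where `Φ_t = t^{-d} Φ(·/t)`; set to `0` for `t ≤ 0`. -/
def convAt (f : TemperedDist d) (Φ : SchwartzC d) (t : ℝ) (x : Ed d) : ℂ :=
  if ht : 0 < t then ((t : ℂ) ^ d)⁻¹ * f (shiftDil Φ x ht) else 0

/-- Extended nonnegative norm of a complex number. -/
def enn (z : ℂ) : ℝ≥0∞ := (‖z‖₊ : ℝ≥0∞)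

/-- The Peetre maximal function `(Φ_t^∗ f)_a (x)`. -/
def peetreAt (f : TemperedDist d) (Φ : SchwartzC d) (a t : ℝ) (x : Ed d) : ℝ≥0∞ :=
  ⨆ y : Ed d, enn (convAt f Φ t (x + y)) / ENNReal.ofReal ((1 + ‖y‖ / t) ^ a)

/-- `L_p`-quasinorm (with values in `[0,∞]`) of an extended-valued function, `0 < p ≤ ∞`. -/
def lpE (p : ℝ≥0∞) (F : Ed d → ℝ≥0∞) : ℝ≥0∞ :=
  if p = ∞ then essSup F volume
  else (∫⁻ x, F x ^ p.toReal) ^ (1 / p.toReal)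

/-- `(∫_S G(t)^q w(t) dt)^{1/q}` with the usual modification (`sup` over `S`) for `q = ∞`. -/
def intAgg (q : ℝ≥0∞) (S : Set ℝ) (w : ℝ → ℝ) (G : ℝ → ℝ≥0∞) : ℝ≥0∞ :=
  if q = ∞ then ⨆ t ∈ S, G t
  else (∫⁻ t in S, G t ^ q.toReal * ENNReal.ofReal (w t)) ^ (1 / q.toReal)

/-- `(Σ_{k∈ℕ} G(k)^q)^{1/q}` with the usual modification for `q = ∞`. -/
def sumAggN (q : ℝ≥0∞) (G : ℕ → ℝ≥0∞) : ℝ≥0∞ :=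
  if q = ∞ then ⨆ k, G k else (∑' k, G k ^ q.toReal) ^ (1 / q.toReal)

/-- `(Σ_{k∈ℤ} G(k)^q)^{1/q}` with the usual modification for `q = ∞`. -/
def sumAggZ (q : ℝ≥0∞) (G : ℤ → ℝ≥0∞) : ℝ≥0∞ :=
  if q = ∞ then ⨆ k, G k else (∑' k, G k ^ q.toReal) ^ (1 / q.toReal)

/-- Tent (Lusin) aggregation `(∫_S ∫_{|z|<t} H(t,z)^q dz dt/t^{d+1})^{1/q}`,
with the usual modification for `q = ∞`. -/
def tentAgg (q : ℝ≥0∞) (S : Set ℝ) (H : ℝ → Ed d → ℝ≥0∞) : ℝ≥0∞ :=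
  if q = ∞ then ⨆ t ∈ S, ⨆ z ∈ Metric.ball (0 : Ed d) t, H t z
  else (∫⁻ t in S, (∫⁻ z in Metric.ball (0 : Ed d) t, H t z ^ q.toReal) *
      ENNReal.ofReal (t ^ (-(d : ℝ) - 1))) ^ (1 / q.toReal)

/-- Inhomogeneous kernel family: `Φ₀` for `j = 0` and `Φ` for `j ≥ 1`. -/
def kin (Φ₀ Φ : SchwartzC d) (j : ℕ) : SchwartzC d := if j = 0 then Φ₀ else Φ

/-- Dyadic scale `2^{-j}`, `j ∈ ℕ`. -/
def scN (j : ℕ) : ℝ := (2 : ℝ) ^ (-(j : ℤ))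

/-- Dyadic scale `2^{-k}`, `k ∈ ℤ`. -/
def scZ (k : ℤ) : ℝ := (2 : ℝ) ^ (-k)

/-- Tauberian condition for the pair `(Φ₀, Φ)` with parameter `ε`. -/
def TauberianPair (Φ₀ Φ : SchwartzC d) (ε : ℝ) : Prop :=
  (∀ ξ : Ed d, ‖ξ‖ < 2 * ε → 𝓕 ⇑Φ₀ ξ ≠ 0) ∧
  (∀ ξ : Ed d, ε / 2 < ‖ξ‖ → ‖ξ‖ < 2 * ε → 𝓕 ⇑Φ ξ ≠ 0)

/-- Homogeneous Tauberian condition for `Φ` with parameter `ε`. -/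
def TauberianHom (Φ : SchwartzC d) (ε : ℝ) : Prop :=
  ∀ ξ : Ed d, ε / 2 < ‖ξ‖ → ‖ξ‖ < 2 * ε → 𝓕 ⇑Φ ξ ≠ 0

/-- Moment condition of order `R`: all derivatives of `ℱΦ` of order `≤ R` vanish at `0`. -/
def MomentCond (Φ : SchwartzC d) (R : ℕ) : Prop :=
  ∀ n : ℕ, n ≤ R → iteratedFDeriv ℝ n (𝓕 ⇑Φ) 0 = 0

/-- `φ ∈ S₀`: all derivatives of the Fourier transform vanish at the origin. -/
def IsS0 (φ : SchwartzC d) : Prop :=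
  ∀ n : ℕ, iteratedFDeriv ℝ n (𝓕 ⇑φ) 0 = 0

/-- Inverse Fourier transform of a Schwartz function, as a Schwartz function. -/
def invF (φ : SchwartzC d) : SchwartzC d := (FourierTransform.fourierCLE ℂ (SchwartzC d)).symm φ

/-- Inhomogeneous dyadic resolution of unity `{φ_j}_{j∈ℕ}`, `φ_j = φ(2^{-j}·)` for `j ≥ 1`. -/
structure IsInhomPartition (φ₀ φ : SchwartzC d) : Prop where
  supp₀ : ∀ ξ : Ed d, 2 < ‖ξ‖ → φ₀ ξ = 0
  supp : ∀ ξ : Ed d, ‖ξ‖ < 1 / 2 ∨ 2 < ‖ξ‖ → φ ξ = 0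
  sum_one : ∀ ξ : Ed d, HasSum (fun j : ℕ => (kin φ₀ φ j) (scN j • ξ)) 1

/-- Homogeneous dyadic resolution of unity `{φ_j}_{j∈ℤ}`, `φ_j = φ(2^{-j}·)`. -/
structure IsHomPartition (φ : SchwartzC d) : Prop where
  supp : ∀ ξ : Ed d, ‖ξ‖ < 1 / 2 ∨ 2 < ‖ξ‖ → φ ξ = 0
  sum_one : ∀ ξ : Ed d, ξ ≠ 0 → HasSum (fun j : ℤ => φ (scZ j • ξ)) 1

/-- `min{p,q}` where `q` may be `∞`. -/
def minpq (p : ℝ) (q : ℝ≥0∞) : ℝ := if q = ∞ then p else min p q.toReal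

/-- `1/p` with the convention `1/∞ = 0`. -/
def invE (p : ℝ≥0∞) : ℝ := if p = ∞ then 0 else 1 / p.toReal

end
section Part2
noncomputable section

open MeasureTheory Real SchwartzMap Set
open scoped ENNReal NNReal FourierTransform

variable {d : ℕ}

/-- dyadic factor `2^{e·s}` as an extended nonnegative real. -/
def dy (e s : ℝ) : ℝ≥0∞ := ENNReal.ofReal ((2 : ℝ) ^ (e * s))

/-- The five quantities `‖f‖₁,…,‖f‖₅` of Theorem 2.2 (inhomogeneous `F`-scale). -/
def QF (Φ₀ Φ : SchwartzC d) (s p : ℝ) (q : ℝ≥0∞) (a : ℝ) :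
    Fin 5 → TemperedDist d → ℝ≥0∞ :=
  ![fun f => lpE (ENNReal.ofReal p) (fun x => enn (convAt f Φ₀ 1 x))
      + lpE (ENNReal.ofReal p) (fun x =>
          intAgg q (Ioc 0 1) (fun t => t⁻¹)
            (fun t => ENNReal.ofReal (t ^ (-s)) * enn (convAt f Φ t x))),
    fun f => lpE (ENNReal.ofReal p) (fun x => peetreAt f Φ₀ a 1 x)
      + lpE (ENNReal.ofReal p) (fun x =>
          intAgg q (Ioc 0 1) (fun t => t⁻¹)
            (fun t => ENNReal.ofReal (t ^ (-s)) * peetreAt f Φ a t x)),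
    fun f => lpE (ENNReal.ofReal p) (fun x => enn (convAt f Φ₀ 1 x))
      + lpE (ENNReal.ofReal p) (fun x =>
          tentAgg q (Ioc 0 1)
            (fun t z => ENNReal.ofReal (t ^ (-s)) * enn (convAt f Φ t (x + z)))),
    fun f => lpE (ENNReal.ofReal p) (fun x =>
        sumAggN q (fun k => dy k s * peetreAt f (kin Φ₀ Φ k) a (scN k) x)),
    fun f => lpE (ENNReal.ofReal p) (fun x =>
        sumAggN q (fun k => dy k s * enn (convAt f (kin Φ₀ Φ k) (scN k) x)))]

/-- The quasi-norm of `F^s_{p,q}(ℝ^d)` built from a dyadic resolution of unity `(φ₀, φ)`. -/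
def FnormI (φ₀ φ : SchwartzC d) (s p : ℝ) (q : ℝ≥0∞) (f : TemperedDist d) : ℝ≥0∞ :=
  lpE (ENNReal.ofReal p) (fun x =>
    sumAggN q (fun j => dy j s * enn (convAt f (kin (invF φ₀) (invF φ) j) (scN j) x)))

/-- The four quantities of the inhomogeneous Besov characterization. -/
def QB (Φ₀ Φ : SchwartzC d) (s : ℝ) (p q : ℝ≥0∞) (a : ℝ) :
    Fin 4 → TemperedDist d → ℝ≥0∞ :=
  ![fun f => lpE p (fun x => enn (convAt f Φ₀ 1 x))
      + intAgg q (Ioc 0 1) (fun t => t⁻¹)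
          (fun t => ENNReal.ofReal (t ^ (-s)) * lpE p (fun x => enn (convAt f Φ t x))),
    fun f => lpE p (fun x => peetreAt f Φ₀ a 1 x)
      + intAgg q (Ioc 0 1) (fun t => t⁻¹)
          (fun t => ENNReal.ofReal (t ^ (-s)) * lpE p (fun x => peetreAt f Φ a t x)),
    fun f => sumAggN q (fun k =>
        dy k s * lpE p (fun x => peetreAt f (kin Φ₀ Φ k) a (scN k) x)),
    fun f => sumAggN q (fun k =>
        dy k s * lpE p (fun x => enn (convAt f (kin Φ₀ Φ k) (scN k) x)))]

/-- The quasi-norm of `B^s_{p,q}(ℝ^d)` built from a dyadic resolution of unity `(φ₀, φ)`. -/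
def BnormI (φ₀ φ : SchwartzC d) (s : ℝ) (p q : ℝ≥0∞) (f : TemperedDist d) : ℝ≥0∞ :=
  sumAggN q (fun j =>
    dy j s * lpE p (fun x => enn (convAt f (kin (invF φ₀) (invF φ) j) (scN j) x)))

/-- The five quantities of the homogeneous `F`-scale characterization. -/
def QFdot (Φ : SchwartzC d) (s p : ℝ) (q : ℝ≥0∞) (a : ℝ) :
    Fin 5 → TemperedDist d → ℝ≥0∞ :=
  ![fun f => lpE (ENNReal.ofReal p) (fun x =>
        intAgg q (Ioi 0) (fun t => t⁻¹)
          (fun t => ENNReal.ofReal (t ^ (-s)) * enn (convAt f Φ t x))),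
    fun f => lpE (ENNReal.ofReal p) (fun x =>
        intAgg q (Ioi 0) (fun t => t⁻¹)
          (fun t => ENNReal.ofReal (t ^ (-s)) * peetreAt f Φ a t x)),
    fun f => lpE (ENNReal.ofReal p) (fun x =>
        tentAgg q (Ioi 0)
          (fun t z => ENNReal.ofReal (t ^ (-s)) * enn (convAt f Φ t (x + z)))),
    fun f => lpE (ENNReal.ofReal p) (fun x =>
        sumAggZ q (fun k => dy k s * peetreAt f Φ a (scZ k) x)),
    fun f => lpE (ENNReal.ofReal p) (fun x =>
        sumAggZ q (fun k => dy k s * enn (convAt f Φ (scZ k) x)))]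

/-- The quasi-norm of `Ḟ^s_{p,q}(ℝ^d)` built from a homogeneous resolution of unity `φ`. -/
def FnormH (φ : SchwartzC d) (s p : ℝ) (q : ℝ≥0∞) (f : TemperedDist d) : ℝ≥0∞ :=
  lpE (ENNReal.ofReal p) (fun x =>
    sumAggZ q (fun j => dy j s * enn (convAt f (invF φ) (scZ j) x)))

/-- The four quantities of the homogeneous Besov characterization. -/
def QBdot (Φ : SchwartzC d) (s : ℝ) (p q : ℝ≥0∞) (a : ℝ) :
    Fin 4 → TemperedDist d → ℝ≥0∞ :=
  ![fun f => intAgg q (Ioi 0) (fun t => t⁻¹)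
        (fun t => ENNReal.ofReal (t ^ (-s)) * lpE p (fun x => enn (convAt f Φ t x))),
    fun f => intAgg q (Ioi 0) (fun t => t⁻¹)
        (fun t => ENNReal.ofReal (t ^ (-s)) * lpE p (fun x => peetreAt f Φ a t x)),
    fun f => sumAggZ q (fun k => dy k s * lpE p (fun x => peetreAt f Φ a (scZ k) x)),
    fun f => sumAggZ q (fun k => dy k s * lpE p (fun x => enn (convAt f Φ (scZ k) x)))]

/-- The quasi-norm of `Ḃ^s_{p,q}(ℝ^d)` built from a homogeneous resolution of unity `φ`. -/
def BnormH (φ : SchwartzC d) (s : ℝ) (p q : ℝ≥0∞) (f : TemperedDist d) : ℝ≥0∞ :=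
  sumAggZ q (fun j => dy j s * lpE p (fun x => enn (convAt f (invF φ) (scZ j) x)))

/-- Distributional continuous wavelet transform `W_g f(x,t) = t^{d/2} (g_t ∗ f)(x)`. -/
def WT (g : SchwartzC d) (f : TemperedDist d) (x : Ed d) (t : ℝ) : ℂ :=
  ((t ^ ((d : ℝ) / 2) : ℝ) : ℂ) * convAt f g t x

end
end Part2
section Part3
noncomputable section

open MeasureTheory Real SchwartzMap Set
open scoped ENNReal NNReal FourierTransform

variable {d : ℕ}

/-! ### Function spaces on the `ax+b`-group `G = ℝ^d × (0,∞)` -/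

/-- Left translation on the `ax+b`-group: `L_{(z,r)}F(x,t) = F((x-z)/r, t/r)`. -/
def leftTr (z : Ed d) (r : ℝ) (F : Ed d × ℝ → ℂ) : Ed d × ℝ → ℂ :=
  fun w => F (r⁻¹ • (w.1 - z), w.2 / r)

/-- Right translation on the `ax+b`-group: `R_{(z,r)}F(x,t) = F(x + t•z, r·t)`. -/
def rightTr (z : Ed d) (r : ℝ) (F : Ed d × ℝ → ℂ) : Ed d × ℝ → ℂ :=
  fun w => F (w.1 + w.2 • z, r * w.2)

/-- Peetre maximal function on the group, for extended-valued `F`. -/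
def peetreSupE (a : ℝ) (F : Ed d × ℝ → ℝ≥0∞) (x : Ed d) (t : ℝ) : ℝ≥0∞ :=
  ⨆ y : Ed d, F (x + y, t) / ENNReal.ofReal ((1 + ‖y‖ / t) ^ a)

/-- Quasi-norm of the Peetre-type space `Ṗ^{s,a}_{p,q}(G)` (extended-valued version). -/
def PGnormE (s a : ℝ) (p q : ℝ≥0∞) (F : Ed d × ℝ → ℝ≥0∞) : ℝ≥0∞ :=
  lpE p (fun x =>
    intAgg q (Ioi 0) (fun t => t ^ (-(d : ℝ) - 1))
      (fun t => ENNReal.ofReal (t ^ (-s)) * peetreSupE a F x t))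

/-- Quasi-norm of `Ṗ^{s,a}_{p,q}(G)` of a complex-valued function on the group. -/
def PGnorm (s a : ℝ) (p q : ℝ≥0∞) (F : Ed d × ℝ → ℂ) : ℝ≥0∞ :=
  PGnormE s a p q (fun w => enn (F w))

/-- Quasi-norm of the space `L̇^s_{p,q}(G)` (extended-valued version). -/
def LGnormE (s : ℝ) (p q : ℝ≥0∞) (F : Ed d × ℝ → ℝ≥0∞) : ℝ≥0∞ :=
  intAgg q (Ioi 0) (fun t => t ^ (-(d : ℝ) - 1))
    (fun t => ENNReal.ofReal (t ^ (-s)) * lpE p (fun x => F (x, t)))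

/-- Quasi-norm of `L̇^s_{p,q}(G)` of a complex-valued function on the group. -/
def LGnorm (s : ℝ) (p q : ℝ≥0∞) (F : Ed d × ℝ → ℂ) : ℝ≥0∞ :=
  LGnormE s p q (fun w => enn (F w))

/-- Quasi-norm of the tent space `Ṫ^s_{p,q}(G)` of a complex-valued function on the group. -/
def TGnorm (s : ℝ) (p : ℝ≥0∞) (q : ℝ≥0∞) (F : Ed d × ℝ → ℂ) : ℝ≥0∞ :=
  lpE p (fun x =>
    tentAgg q (Ioi 0) (fun t z => ENNReal.ofReal (t ^ (-s)) * enn (F (x + z, t))))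

/-- The cube `Q_{j,k} = Π_i [α k_i β^{-j}, α(k_i+1)β^{-j}]`. -/
def Qcube (α β : ℝ) (j : ℤ) (k : Fin d → ℤ) : Set (Ed d) :=
  {x | ∀ i, α * k i * β ^ (-j) ≤ x i ∧ x i ≤ α * (k i + 1) * β ^ (-j)}

/-- The step function `F(x,t) = Σ_{j,k} |λ_{j,k}| χ_{Q_{j,k}}(x) χ_{[β^{-(j+1)},β^{-j}]}(t)`
associated with a sequence `λ` (extended-valued). -/
def stepFn (α β : ℝ) (lam : ℤ → (Fin d → ℤ) → ℂ) : Ed d × ℝ → ℝ≥0∞ :=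
  fun w => ∑' (j : ℤ) (k : Fin d → ℤ),
    (Qcube α β j k).indicator (fun _ => (‖lam j k‖₊ : ℝ≥0∞)) w.1 *
      (Icc (β ^ (-(j + 1)) : ℝ) (β ^ (-j))).indicator (fun _ => 1) w.2

/-! ### The continuous wavelet transform of square-integrable functions -/

variable {V : Type*} [NormedAddCommGroup V] [InnerProductSpace ℝ V]
  [MeasurableSpace V] [BorelSpace V] [FiniteDimensional ℝ V]

/-- Condition `(D)`: rapid polynomial decay. -/
def CondD (Ψ : V → ℂ) : Prop :=
  ∀ N : ℕ, ∃ C : ℝ, ∀ x, ‖Ψ x‖ ≤ C / (1 + ‖x‖) ^ N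

/-- Condition `(M_{L-1})`: vanishing moments of all orders `< L` (vacuous for `L = 0`). -/
def CondM (Ψ : V → ℂ) (L : ℕ) : Prop :=
  ∀ n : ℕ, n < L → iteratedFDeriv ℝ n (𝓕 Ψ) 0 = 0

end
end Part3
section Part4
noncomputable section

open MeasureTheory Real SchwartzMap Set
open scoped ENNReal NNReal FourierTransform

variable {V : Type*} [NormedAddCommGroup V] [InnerProductSpace ℝ V]
  [MeasureSpace V] [BorelSpace V] [FiniteDimensional ℝ V]

/-- Condition `(S_K)`: `(1+|ξ|)^K |D^ᾱ ℱΨ(ξ)|` is integrable for every multi-index. -/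
def CondS (Ψ : V → ℂ) (K : ℝ) : Prop :=
  ∀ n : ℕ, Integrable (fun ξ : V =>
    (1 + ‖ξ‖) ^ K * ‖iteratedFDeriv ℝ n (𝓕 Ψ) ξ‖) volume

/-- The continuous wavelet transform `W_g f(x,t) = ⟨T_x D_t^{L₂} g, f⟩` of functions. -/
def CWT (g f : V → ℂ) (x : V) (t : ℝ) : ℂ :=
  ∫ y : V, (starRingEnd ℂ)
      (((t ^ (-(Module.finrank ℝ V : ℝ) / 2) : ℝ) : ℂ) * g (t⁻¹ • (y - x))) * f y

end
end Part4
open MeasureTheory Real SchwartzMap Set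
open scoped ENNReal NNReal FourierTransform

/-! By Parseval, `W_Φ Φ₀(x, t) = t^{d/2} 𝓕⁻[ξ ↦ conj (𝓕Φ (t ξ)) 𝓕Φ₀ ξ](x)`, so the decay
`(1 + |x|)^{-N}` follows once the first `N` derivatives of `h_t = conj (𝓕Φ (t ·)) 𝓕Φ₀` are
integrable, and the factor `t^m`, `m = min {L, K}`, once their `L¹` norms are `O(t^m)`. By the
moment condition and Taylor's formula, `D^i 𝓕Φ (η) = O(|η|^{m-i})` for `i < m`, so every
derivative of `𝓕Φ (t ·)` is `O(t^m (1 + |ξ|)^m)`; by Leibniz' rule the weight `(1 + |ξ|)^m` is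
absorbed by the derivatives of `𝓕Φ₀`, which are integrable against `(1 + |ξ|)^K` by `(S_K)`. -/

open scoped RealInnerProductSpace ContDiff ComplexConjugate

section

variable {E F : Type*} [NormedAddCommGroup E] [NormedSpace ℝ E]
  [NormedAddCommGroup F] [NormedSpace ℝ F]

theorem norm_iteratedFDeriv_le_of_iteratedFDeriv_zero_eq_zero {f : E → F} {J : ℕ} {B : ℝ}
    (hf : ContDiff ℝ J f) (hvan : ∀ i < J, iteratedFDeriv ℝ i f 0 = 0)
    (hB : ∀ η, ‖iteratedFDeriv ℝ J f η‖ ≤ B) {i : ℕ} (hi : i ≤ J) (η : E) :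
    ‖iteratedFDeriv ℝ i f η‖ ≤ B * ‖η‖ ^ (J - i) := by
  induction hi using Nat.decreasingInduction generalizing η with
  | self => simpa using hB η
  | of_succ i hiJ ih =>
    have hB0 : 0 ≤ B := (norm_nonneg _).trans (hB 0)
    have hdiff : Differentiable ℝ (iteratedFDeriv ℝ i f) :=
      hf.differentiable_iteratedFDeriv (by exact_mod_cast hiJ)
    have hderiv : ∀ y ∈ Metric.closedBall (0 : E) ‖η‖,
        ‖fderiv ℝ (iteratedFDeriv ℝ i f) y‖ ≤ B * ‖η‖ ^ (J - (i + 1)) := fun y hy => by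
      rw [norm_fderiv_iteratedFDeriv]
      refine (ih y).trans (mul_le_mul_of_nonneg_left (pow_le_pow_left₀ (norm_nonneg _) ?_ _) hB0)
      simpa using hy
    have hmvt := (convex_closedBall (0 : E) ‖η‖).norm_image_sub_le_of_norm_fderiv_le
      (fun y _ => hdiff y) hderiv (Metric.mem_closedBall_self (norm_nonneg η))
      (by simp : η ∈ Metric.closedBall 0 ‖η‖)
    rw [hvan i hiJ, sub_zero, sub_zero] at hmvt
    calc ‖iteratedFDeriv ℝ i f η‖ ≤ B * ‖η‖ ^ (J - (i + 1)) * ‖η‖ := hmvt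
      _ = B * ‖η‖ ^ (J - i) := by rw [mul_assoc, ← pow_succ]; congr 3; omega

theorem norm_iteratedFDeriv_le_rpow_of_iteratedFDeriv_zero_eq_zero {G : E → F} {L i : ℕ}
    {m A B : ℝ} (hG : ContDiff ℝ L G) (hvan : ∀ j < L, iteratedFDeriv ℝ j G 0 = 0)
    (hA : ∀ η, ‖iteratedFDeriv ℝ i G η‖ ≤ A) (hB : ∀ η, ‖iteratedFDeriv ℝ L G η‖ ≤ B)
    (him : i ≤ m) (hmL : m ≤ L) (η : E) :
    ‖iteratedFDeriv ℝ i G η‖ ≤ (A + B) * ‖η‖ ^ (m - i) := by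
  have hA0 : 0 ≤ A := (norm_nonneg _).trans (hA 0)
  have hB0 : 0 ≤ B := (norm_nonneg _).trans (hB 0)
  have hiL : i ≤ L := by exact_mod_cast him.trans hmL
  rcases le_or_gt ‖η‖ 1 with hη | hη
  · have hpow : ‖η‖ ^ (L - i) ≤ ‖η‖ ^ (m - i) := by
      rw [← Real.rpow_natCast, Nat.cast_sub hiL]
      exact Real.rpow_le_rpow_of_exponent_ge' (norm_nonneg η) hη (by linarith) (by linarith)
    calc ‖iteratedFDeriv ℝ i G η‖ ≤ B * ‖η‖ ^ (L - i) :=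
          norm_iteratedFDeriv_le_of_iteratedFDeriv_zero_eq_zero hG hvan hB hiL η
      _ ≤ (A + B) * ‖η‖ ^ (m - i) := by gcongr; linarith
  · calc ‖iteratedFDeriv ℝ i G η‖ ≤ A * 1 := by simpa using hA η
      _ ≤ (A + B) * ‖η‖ ^ (m - i) := by
          gcongr
          · linarith
          · exact Real.one_le_rpow hη.le (by linarith)

theorem norm_iteratedFDeriv_comp_smul_le {G : E → F} {L i : ℕ} {m A B t : ℝ}
    (hG : ContDiff ℝ ∞ G) (hvan : ∀ j < L, iteratedFDeriv ℝ j G 0 = 0)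
    (hA : ∀ η, ‖iteratedFDeriv ℝ i G η‖ ≤ A) (hB : ∀ η, ‖iteratedFDeriv ℝ L G η‖ ≤ B)
    (hm0 : 0 ≤ m) (hmL : m ≤ L) (ht : 0 < t) (ht1 : t ≤ 1) (ξ : E) :
    ‖iteratedFDeriv ℝ i (fun ξ => G (t • ξ)) ξ‖ ≤ (A + B) * t ^ m * (1 + ‖ξ‖) ^ m := by
  have hA0 : 0 ≤ A := (norm_nonneg _).trans (hA 0)
  have hB0 : 0 ≤ B := (norm_nonneg _).trans (hB 0)
  have hξ : 1 ≤ (1 + ‖ξ‖) ^ m := Real.one_le_rpow (by simp) hm0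
  rw [iteratedFDeriv_comp_const_smul t (hG.of_le (by exact_mod_cast le_top)), norm_smul,
    norm_pow, Real.norm_of_nonneg ht.le]
  rcases le_or_gt m i with hmi | him
  · have hti : t ^ i ≤ t ^ m := by
      rw [← Real.rpow_natCast]; exact Real.rpow_le_rpow_of_exponent_ge ht ht1 hmi
    calc t ^ i * ‖iteratedFDeriv ℝ i G (t • ξ)‖ ≤ t ^ m * A * 1 := by
          rw [mul_one]; exact mul_le_mul hti (hA _) (norm_nonneg _) (by positivity)
      _ ≤ (A + B) * t ^ m * (1 + ‖ξ‖) ^ m := by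
          rw [mul_comm (t ^ m)]; gcongr; linarith
  · have hsplit : t ^ i * ‖t • ξ‖ ^ (m - i) = t ^ m * ‖ξ‖ ^ (m - i) := by
      rw [norm_smul, Real.norm_of_nonneg ht.le, Real.mul_rpow ht.le (norm_nonneg ξ),
        ← Real.rpow_natCast, ← mul_assoc, ← Real.rpow_add ht, add_sub_cancel]
    have hξm : ‖ξ‖ ^ (m - i) ≤ (1 + ‖ξ‖) ^ m :=
      (Real.rpow_le_rpow (norm_nonneg ξ) (by linarith) (by linarith)).trans
        (Real.rpow_le_rpow_of_exponent_le (by simp) (by linarith [(i.cast_nonneg : (0:ℝ) ≤ i)]))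
    calc t ^ i * ‖iteratedFDeriv ℝ i G (t • ξ)‖
        ≤ t ^ i * ((A + B) * ‖t • ξ‖ ^ (m - i)) := by
          gcongr
          exact norm_iteratedFDeriv_le_rpow_of_iteratedFDeriv_zero_eq_zero
            (hG.of_le (by exact_mod_cast le_top)) hvan hA hB him.le hmL _
      _ = (A + B) * t ^ m * ‖ξ‖ ^ (m - i) := by rw [mul_left_comm, hsplit, mul_assoc]
      _ ≤ (A + B) * t ^ m * (1 + ‖ξ‖) ^ m := by gcongr

theorem norm_iteratedFDeriv_conj (f : E → ℂ) (n : ℕ) (x : E) :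
    ‖iteratedFDeriv ℝ n (fun y => conj (f y)) x‖ = ‖iteratedFDeriv ℝ n f x‖ :=
  Complex.conjLIE.norm_iteratedFDeriv_comp_left f x n


theorem exists_integrable_bound_iteratedFDeriv_comp_smul_mul [MeasurableSpace E] {μ : Measure E}
    {G F : E → ℂ} {L : ℕ} {m K : ℝ} (hG : ContDiff ℝ ∞ G)
    (hvan : ∀ j < L, iteratedFDeriv ℝ j G 0 = 0)
    (hGb : ∀ n, ∃ B, ∀ η, ‖iteratedFDeriv ℝ n G η‖ ≤ B) (hF : ContDiff ℝ ∞ F)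
    (hFK : ∀ n, Integrable (fun ξ => (1 + ‖ξ‖) ^ K * ‖iteratedFDeriv ℝ n F ξ‖) μ)
    (hm0 : 0 ≤ m) (hmL : m ≤ L) (hmK : m ≤ K) (n : ℕ) :
    ∃ g : E → ℝ, Integrable g μ ∧ ∀ t, 0 < t → t ≤ 1 → ∀ ξ,
      ‖iteratedFDeriv ℝ n (fun ξ => G (t • ξ) * F ξ) ξ‖ ≤ t ^ m * g ξ := by
  choose B hB using hGb
  refine ⟨fun ξ => ∑ i ∈ Finset.range (n + 1),
    n.choose i * (B i + B L) * ((1 + ‖ξ‖) ^ K * ‖iteratedFDeriv ℝ (n - i) F ξ‖),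
    integrable_finsetSum _ fun i _ => (hFK (n - i)).const_mul _, fun t ht ht1 ξ => ?_⟩
  have hGt : ContDiff ℝ ∞ (fun ξ => G (t • ξ)) := hG.comp (contDiff_const_smul t)
  refine (norm_iteratedFDeriv_mul_le hGt hF ξ (by exact_mod_cast le_top)).trans ?_
  rw [Finset.mul_sum]
  refine Finset.sum_le_sum fun i _ => ?_
  have hGi := norm_iteratedFDeriv_comp_smul_le hG hvan (hB i) (hB L) hm0 hmL ht ht1 ξ
  have hKm : (1 + ‖ξ‖) ^ m ≤ (1 + ‖ξ‖) ^ K := Real.rpow_le_rpow_of_exponent_le (by simp) hmK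
  have hAB : 0 ≤ B i + B L := add_nonneg ((norm_nonneg _).trans (hB i 0))
    ((norm_nonneg _).trans (hB L 0))
  calc (n.choose i : ℝ) * ‖iteratedFDeriv ℝ i (fun ξ => G (t • ξ)) ξ‖ *
        ‖iteratedFDeriv ℝ (n - i) F ξ‖
      ≤ n.choose i * ((B i + B L) * t ^ m * (1 + ‖ξ‖) ^ K) *
        ‖iteratedFDeriv ℝ (n - i) F ξ‖ := by
        gcongr
        exact hGi.trans (by gcongr)
    _ = t ^ m * (n.choose i * (B i + B L) *
        ((1 + ‖ξ‖) ^ K * ‖iteratedFDeriv ℝ (n - i) F ξ‖)) := by ring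

end

section

variable {V E : Type*} [NormedAddCommGroup V] [InnerProductSpace ℝ V] [FiniteDimensional ℝ V]
  [MeasurableSpace V] [BorelSpace V] [NormedAddCommGroup E] [NormedSpace ℂ E]

theorem one_add_norm_pow_mul_norm_fourier_le {h : V → E} {N : ℕ} (hh : ContDiff ℝ N h)
    (hint : ∀ n ≤ N, Integrable (fun v => ‖iteratedFDeriv ℝ n h v‖)) (z : V) :
    (1 + ‖z‖) ^ N * ‖𝓕 h z‖ ≤
      2 ^ N * (1 + 2 ^ N) * ∑ n ∈ Finset.range (N + 1), ∫ v, ‖iteratedFDeriv ℝ n h v‖ := by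
  set S := ∑ n ∈ Finset.range (N + 1), ∫ v, ‖iteratedFDeriv ℝ n h v‖
  have hS : ‖𝓕 h z‖ ≤ S := by
    refine (VectorFourier.norm_fourierIntegral_le_integral_norm _ _ _ _ _).trans ?_
    simpa using Finset.single_le_sum (f := fun n => ∫ v, ‖iteratedFDeriv ℝ n h v‖)
      (fun n _ => integral_nonneg fun v => norm_nonneg _) (Finset.mem_range.2 N.succ_pos)
  have hzS : ‖z‖ ^ N * ‖𝓕 h z‖ ≤ 2 ^ N * S := by
    have := Real.pow_mul_norm_iteratedFDeriv_fourier_le (K := 0) (N := N) hh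
      (fun k n hk hn => by
        obtain rfl : k = 0 := by exact_mod_cast nonpos_iff_eq_zero.1 hk
        simpa using hint n (by exact_mod_cast hn)) le_rfl le_rfl z
    simpa [Finset.sum_product] using this
  calc (1 + ‖z‖) ^ N * ‖𝓕 h z‖ ≤ 2 ^ N * (1 + ‖z‖ ^ N) * ‖𝓕 h z‖ := by
        gcongr
        calc (1 + ‖z‖) ^ N ≤ 2 ^ (N - 1) * (1 ^ N + ‖z‖ ^ N) :=
              add_pow_le zero_le_one (norm_nonneg z) N
          _ ≤ 2 ^ N * (1 + ‖z‖ ^ N) := by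
              rw [one_pow]; gcongr; exacts [one_le_two, N.sub_le 1]
    _ = 2 ^ N * (‖𝓕 h z‖ + ‖z‖ ^ N * ‖𝓕 h z‖) := by ring
    _ ≤ 2 ^ N * (S + 2 ^ N * S) := by gcongr
    _ = 2 ^ N * (1 + 2 ^ N) * S := by ring

theorem integral_conj_fourier_mul_eq {f g : V → ℂ} (hf : Integrable f) (hg : Integrable g) :
    ∫ ξ, conj (𝓕 f ξ) * g ξ = ∫ x, conj (f x) * 𝓕⁻ g x := by
  have h := VectorFourier.integral_sesq_fourierIntegral_eq_neg_flip (innerSL ℂ) (L := innerₗ V)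
      Real.continuous_fourierChar continuous_inner hf hg
  simp only [coe_innerSL_apply, RCLike.inner_apply, flip_innerₗ] at h
  simp_rw [mul_comm (conj _)]
  exact h

theorem integral_conj_fourierInv_mul_eq {f g : V → ℂ} (hf : Integrable f) (hg : Integrable g) :
    ∫ ξ, conj (𝓕⁻ f ξ) * g ξ = ∫ x, conj (f x) * 𝓕 g x := by
  have := congrArg conj (integral_conj_fourier_mul_eq hg hf)
  simp only [← integral_conj, map_mul, Complex.conj_conj] at this
  simpa only [mul_comm] using this.symm

theorem MeasureTheory.Integrable.ae_eq_fourierInv_fourier {f : V → ℂ} (hf : Integrable f)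
    (h'f : Integrable (𝓕 f)) : f =ᵐ[volume] 𝓕⁻ (𝓕 f) := by
  have hcont : Continuous (𝓕⁻ (𝓕 f)) :=
    VectorFourier.fourierIntegral_continuous Real.continuous_fourierChar
      (L := -innerₗ V) (continuous_inner.neg) h'f
  refine ae_eq_of_integral_contDiff_smul_eq hf.locallyIntegrable hcont.locallyIntegrable
    fun φ hφ hφc => ?_
  let ψ : 𝓢(V, ℂ) := (hφc.comp_left (g := ((↑) : ℝ → ℂ)) rfl).toSchwartzMap
    (Complex.ofRealCLM.contDiff.comp hφ)
  have hψ : ∀ x, (φ x : ℂ) = conj (ψ x) := fun x => (Complex.conj_ofReal _).symm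
  have hinv : 𝓕⁻ (𝓕 ψ) = ψ := FourierTransform.fourierInv_fourier_eq ψ
  simp_rw [Complex.real_smul, hψ]
  calc ∫ x, conj (ψ x) * f x = ∫ x, conj (𝓕⁻ (𝓕 ψ) x) * f x := by rw [hinv]
    _ = ∫ ξ, conj (𝓕 ψ ξ) * 𝓕 f ξ := by
        rw [SchwartzMap.fourierInv_coe, integral_conj_fourierInv_mul_eq (𝓕 ψ).integrable hf,
          SchwartzMap.fourier_coe]
    _ = ∫ x, conj (ψ x) * 𝓕⁻ (𝓕 f) x := integral_conj_fourier_mul_eq ψ.integrable h'f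

theorem integral_conj_mul_eq_integral_conj_fourier_mul_fourier {u f : V → ℂ} (hu : Integrable u)
    (hf : Integrable f) (h'f : Integrable (𝓕 f)) :
    ∫ x, conj (u x) * f x = ∫ ξ, conj (𝓕 u ξ) * 𝓕 f ξ := by
  rw [integral_conj_fourier_mul_eq hu h'f]
  exact integral_congr_ae
    ((hf.ae_eq_fourierInv_fourier h'f).mono fun x hx => congrArg (conj (u x) * ·) hx)

theorem fourier_comp_inv_smul_sub (f : V → E) {t : ℝ} (ht : 0 < t) (x ξ : V) :
    𝓕 (fun y => f (t⁻¹ • (y - x))) ξ =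
      (t ^ Module.finrank ℝ V : ℝ) • 𝐞 (-⟪x, ξ⟫) • 𝓕 f (t • ξ) := by
  have hdil : ∀ g : V → E, ∫ y, g y = (t ^ Module.finrank ℝ V : ℝ) • ∫ v, g (t • v) := by
    intro g
    rw [Measure.integral_comp_smul, abs_of_pos (by positivity), smul_smul,
      mul_inv_cancel₀ (by positivity), one_smul]
  rw [Real.fourier_eq, Real.fourier_eq, ← integral_add_left_eq_self _ x, hdil]
  congr 1
  simp only [Circle.smul_def]
  rw [← integral_smul]
  congr 1 with v
  rw [add_sub_cancel_left, inv_smul_smul₀ ht.ne', smul_smul, ← Circle.coe_mul,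
    ← AddChar.map_add_eq_mul, inner_add_left, real_inner_smul_left, real_inner_smul_right,
    neg_add, real_inner_comm]

theorem CWT_eq_fourierInv {Φ Φ₀ : V → ℂ} (hΦ : Integrable Φ) (hΦ₀ : Integrable Φ₀)
    (h𝓕Φ₀ : Integrable (𝓕 Φ₀)) {t : ℝ} (ht : 0 < t) (x : V) :
    CWT Φ Φ₀ x t = ((t ^ ((Module.finrank ℝ V : ℝ) / 2) : ℝ) : ℂ) *
      𝓕⁻ (fun ξ => conj (𝓕 Φ (t • ξ)) * 𝓕 Φ₀ ξ) x := by
  set u : V → ℂ := fun y => Φ (t⁻¹ • (y - x))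
  have hu : Integrable u :=
    ((integrable_comp_smul_iff volume Φ (inv_ne_zero ht.ne')).2 hΦ).comp_sub_right x
  have hconj : ∀ ξ, conj (𝓕 u ξ) =
      (t ^ Module.finrank ℝ V : ℝ) * (𝐞 ⟪ξ, x⟫ * conj (𝓕 Φ (t • ξ))) := fun ξ => by
    rw [fourier_comp_inv_smul_sub Φ ht, Complex.real_smul, Circle.smul_def, smul_eq_mul,
      map_mul, map_mul, Complex.conj_ofReal, AddChar.map_neg_eq_inv, Circle.coe_inv_eq_conj,
      Complex.conj_conj, real_inner_comm]
  calc CWT Φ Φ₀ x t = ((t ^ (-(Module.finrank ℝ V : ℝ) / 2) : ℝ) : ℂ) * ∫ y, conj (u y) * Φ₀ y := by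
        rw [CWT, ← integral_const_mul]
        simp only [map_mul, Complex.conj_ofReal, mul_assoc, u]
    _ = ((t ^ (-(Module.finrank ℝ V : ℝ) / 2) : ℝ) : ℂ) * ((t ^ Module.finrank ℝ V : ℝ) *
          𝓕⁻ (fun ξ => conj (𝓕 Φ (t • ξ)) * 𝓕 Φ₀ ξ) x) := by
        congr 1
        rw [integral_conj_mul_eq_integral_conj_fourier_mul_fourier hu hΦ₀ h𝓕Φ₀,
          Real.fourierInv_eq, ← integral_const_mul]
        simp only [hconj, Circle.smul_def, smul_eq_mul, mul_assoc]
    _ = _ := by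
        rw [← mul_assoc, ← Complex.ofReal_mul, ← Real.rpow_natCast, ← Real.rpow_add ht]
        ring_nf

theorem CondD.integrable_norm_pow_mul_norm {Φ : V → ℂ} (hD : CondD Φ)
    (hm : AEStronglyMeasurable Φ) (n : ℕ) : Integrable (fun v => ‖v‖ ^ n * ‖Φ v‖) := by
  set r := Module.finrank ℝ V
  obtain ⟨C, hC⟩ := hD (n + r + 1)
  have hmaj : Integrable (fun v : V => C * (1 + ‖v‖) ^ (-((r + 1 : ℕ) : ℝ))) :=
    (integrable_one_add_norm (by push_cast; linarith)).const_mul C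
  refine hmaj.mono' ((continuous_norm.pow n).aestronglyMeasurable.mul hm.norm)
    (ae_of_all _ fun v => ?_)
  have hv : 0 < 1 + ‖v‖ := by positivity
  rw [Real.norm_of_nonneg (by positivity), Real.rpow_neg hv.le, Real.rpow_natCast]
  calc ‖v‖ ^ n * ‖Φ v‖ ≤ (1 + ‖v‖) ^ n * (C / (1 + ‖v‖) ^ (n + r + 1)) :=
        mul_le_mul (pow_le_pow_left₀ (norm_nonneg v) (by linarith) n) (hC v)
          (norm_nonneg _) (by positivity)
    _ = C * ((1 + ‖v‖) ^ (r + 1))⁻¹ := by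
        rw [add_assoc, pow_add]; field_simp

theorem CondD.integrable {Φ : V → ℂ} (hD : CondD Φ) (hm : AEStronglyMeasurable Φ) :
    Integrable Φ :=
  (integrable_norm_iff hm).1 (by simpa using hD.integrable_norm_pow_mul_norm hm 0)

theorem CondD.contDiff_fourier {Φ : V → ℂ} (hD : CondD Φ) (hm : AEStronglyMeasurable Φ) :
    ContDiff ℝ ∞ (𝓕 Φ) :=
  Real.contDiff_fourier (N := ⊤) fun n _ => hD.integrable_norm_pow_mul_norm hm n

theorem CondD.exists_bound_iteratedFDeriv_fourier {Φ : V → ℂ} (hD : CondD Φ)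
    (hm : AEStronglyMeasurable Φ) (n : ℕ) :
    ∃ B, ∀ η, ‖iteratedFDeriv ℝ n (𝓕 Φ) η‖ ≤ B := by
  refine ⟨(2 * π) ^ n * ∫ v, ‖v‖ ^ n * ‖Φ v‖, fun η => ?_⟩
  rw [Real.iteratedFDeriv_fourier (N := n) (fun k _ => hD.integrable_norm_pow_mul_norm hm k) hm
    le_rfl]
  refine (VectorFourier.norm_fourierIntegral_le_integral_norm _ _ _ _ _).trans ?_
  rw [← integral_const_mul]
  refine integral_mono_of_nonneg (ae_of_all _ fun v => norm_nonneg _)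
    ((hD.integrable_norm_pow_mul_norm hm n).const_mul _) (ae_of_all _ fun v => ?_)
  refine (VectorFourier.norm_fourierPowSMulRight_le _ _ _ _).trans ?_
  rw [mul_assoc]
  show _ ≤ (2 * π) ^ n * (‖v‖ ^ n * ‖Φ v‖)
  have hL : 2 * π * ‖innerSL (E := V) ℝ‖ ≤ 2 * π :=
    mul_le_of_le_one_right (by positivity) (norm_innerSL_le ℝ)
  exact mul_le_mul_of_nonneg_right (pow_le_pow_left₀ (by positivity) hL n) (by positivity)

theorem CondS.integrable_fourier {Ψ : V → ℂ} {K : ℝ} (hS : CondS Ψ K) (hK : 0 ≤ K)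
    (hc : Continuous (𝓕 Ψ)) : Integrable (𝓕 Ψ) :=
  (hS 0).mono' hc.aestronglyMeasurable (ae_of_all _ fun ξ => by
    simpa using le_mul_of_one_le_left (norm_nonneg _) (Real.one_le_rpow (by simp) hK))

theorem exists_one_add_norm_pow_mul_norm_fourier_comp_smul_mul_le {G F : V → ℂ} {L : ℕ}
    {m K : ℝ} (hG : ContDiff ℝ ∞ G) (hvan : ∀ j < L, iteratedFDeriv ℝ j G 0 = 0)
    (hGb : ∀ n, ∃ B, ∀ η, ‖iteratedFDeriv ℝ n G η‖ ≤ B) (hF : ContDiff ℝ ∞ F)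
    (hFK : ∀ n, Integrable (fun ξ => (1 + ‖ξ‖) ^ K * ‖iteratedFDeriv ℝ n F ξ‖))
    (hm0 : 0 ≤ m) (hmL : m ≤ L) (hmK : m ≤ K) (N : ℕ) :
    ∃ C, ∀ t, 0 < t → t ≤ 1 → ∀ z,
      (1 + ‖z‖) ^ N * ‖𝓕 (fun ξ => G (t • ξ) * F ξ) z‖ ≤ C * t ^ m := by
  choose g hg hgb using fun n =>
    exists_integrable_bound_iteratedFDeriv_comp_smul_mul hG hvan hGb hF hFK hm0 hmL hmK n
  refine ⟨2 ^ N * (1 + 2 ^ N) * ∑ n ∈ Finset.range (N + 1), ∫ ξ, g n ξ, fun t ht ht1 z => ?_⟩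
  have hh : ContDiff ℝ ∞ (fun ξ => G (t • ξ) * F ξ) := (hG.comp (contDiff_const_smul t)).mul hF
  have hint : ∀ n, Integrable (fun ξ => ‖iteratedFDeriv ℝ n (fun ξ => G (t • ξ) * F ξ) ξ‖) :=
    fun n => ((hg n).const_mul (t ^ m)).mono'
      (hh.continuous_iteratedFDeriv (by exact_mod_cast le_top)).norm.aestronglyMeasurable
      (ae_of_all _ fun ξ => by rw [norm_norm]; exact hgb n t ht ht1 ξ)
  have hsum : ∑ n ∈ Finset.range (N + 1), ∫ ξ, ‖iteratedFDeriv ℝ n (fun ξ => G (t • ξ) * F ξ) ξ‖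
      ≤ (∑ n ∈ Finset.range (N + 1), ∫ ξ, g n ξ) * t ^ m := by
    rw [Finset.sum_mul]
    refine Finset.sum_le_sum fun n _ => ?_
    rw [mul_comm, ← integral_const_mul]
    exact integral_mono (hint n) ((hg n).const_mul _) (hgb n t ht ht1)
  calc (1 + ‖z‖) ^ N * ‖𝓕 (fun ξ => G (t • ξ) * F ξ) z‖
      ≤ 2 ^ N * (1 + 2 ^ N) *
        ∑ n ∈ Finset.range (N + 1), ∫ ξ, ‖iteratedFDeriv ℝ n (fun ξ => G (t • ξ) * F ξ) ξ‖ :=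
        one_add_norm_pow_mul_norm_fourier_le (hh.of_le (by exact_mod_cast le_top))
          (fun n _ => hint n) z
    _ ≤ 2 ^ N * (1 + 2 ^ N) * ((∑ n ∈ Finset.range (N + 1), ∫ ξ, g n ξ) * t ^ m) := by gcongr
    _ = _ := by ring

end

theorem statement12_general (d : ℕ) (L : ℕ) (K : ℝ) (hK : 0 < K)
    (Φ Φ₀ : Ed d → ℂ)
    (hΦ2 : MemLp Φ 2 (volume : Measure (Ed d)))
    (hΦ₀2 : MemLp Φ₀ 2 (volume : Measure (Ed d)))
    (hΦD : CondD Φ) (hΦM : CondM Φ L)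
    (hΦ₀D : CondD Φ₀) (hΦ₀S : CondS Φ₀ K) :
    ∀ N : ℕ, ∃ C : ℝ,
      ∀ (x : Ed d) (t : ℝ), 0 < t → t < 1 →
        ‖CWT Φ Φ₀ x t‖ ≤
          C * t ^ (min (L : ℝ) K + (d : ℝ) / 2) * (1 + ‖x‖) ^ (-(N : ℝ)) := by
  intro N
  have hΦm := hΦ2.aestronglyMeasurable
  have hΦ₀m := hΦ₀2.aestronglyMeasurable
  have hF := hΦ₀D.contDiff_fourier hΦ₀m
  obtain ⟨C, hC⟩ := exists_one_add_norm_pow_mul_norm_fourier_comp_smul_mul_le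
    (G := fun ξ => conj (𝓕 Φ ξ)) (Complex.conjCLE.contDiff.comp (hΦD.contDiff_fourier hΦm))
    (fun j hj => norm_eq_zero.1 (by rw [norm_iteratedFDeriv_conj, hΦM j hj, norm_zero]))
    (fun n => by
      simpa only [norm_iteratedFDeriv_conj] using hΦD.exists_bound_iteratedFDeriv_fourier hΦm n)
    hF hΦ₀S (le_min L.cast_nonneg hK.le) (min_le_left _ _) (min_le_right _ _) N
  refine ⟨C, fun x t ht ht1 => ?_⟩
  have hx : 0 < 1 + ‖x‖ := by positivity
  have hCx := hC t ht ht1.le (-x)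
  rw [norm_neg] at hCx
  rw [CWT_eq_fourierInv (hΦD.integrable hΦm) (hΦ₀D.integrable hΦ₀m)
      (hΦ₀S.integrable_fourier hK.le hF.continuous) ht, finrank_euclideanSpace_fin, norm_mul,
    Complex.norm_real, Real.norm_of_nonneg (by positivity), Real.fourierInv_eq_fourier_neg,
    Real.rpow_add ht, Real.rpow_neg hx.le, Real.rpow_natCast, ← div_eq_mul_inv,
    le_div_iff₀ (by positivity)]
  calc t ^ ((d : ℝ) / 2) * ‖𝓕 (fun ξ => conj (𝓕 Φ (t • ξ)) * 𝓕 Φ₀ ξ) (-x)‖ * (1 + ‖x‖) ^ N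
      = t ^ ((d : ℝ) / 2) *
        ((1 + ‖x‖) ^ N * ‖𝓕 (fun ξ => conj (𝓕 Φ (t • ξ)) * 𝓕 Φ₀ ξ) (-x)‖) := by ring
    _ ≤ t ^ ((d : ℝ) / 2) * (C * t ^ min (L : ℝ) K) := by gcongr
    _ = C * (t ^ min (L : ℝ) K * t ^ ((d : ℝ) / 2)) := by ring

/-- Decay of the continuous wavelet transform for small scales (Lemma A.3 (i)):
if `Φ` satisfies `(D)`, `(M_{L-1})` and `Φ₀` satisfies `(D)`, `(S_K)`, then
`|(W_Φ Φ₀)(x,t)| ≤ C_N t^{min{L,K}+d/2} (1+|x|)^{-N}` for `0 < t < 1`. -/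
theorem statement12 (d : ℕ) (hd : 1 ≤ d) (L : ℕ) (K : ℝ) (hK : 0 < K)
    (Φ Φ₀ : Ed d → ℂ)
    (hΦ2 : MemLp Φ 2 (volume : Measure (Ed d)))
    (hΦ₀2 : MemLp Φ₀ 2 (volume : Measure (Ed d)))
    (hΦD : CondD Φ) (hΦM : CondM Φ L)
    (hΦ₀D : CondD Φ₀) (hΦ₀S : CondS Φ₀ K) :
    ∀ N : ℕ, ∃ C : ℝ,
      ∀ (x : Ed d) (t : ℝ), 0 < t → t < 1 →
        ‖CWT Φ Φ₀ x t‖ ≤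
          C * t ^ (min (L : ℝ) K + (d : ℝ) / 2) * (1 + ‖x‖) ^ (-(N : ℝ)) :=
  statement12_general d L K hK Φ Φ₀ hΦ2 hΦ₀2 hΦD hΦM hΦ₀D hΦ₀S
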